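/- Let V be a real inner product space, r ≥ 2 and δ ≥ 0 real numbers, σ_c > 0, σ_m > 0, and let σ : V → V satisfy, for all τ, η ∈ V: (H1) ‖σ(τ) − σ(η)‖ ≤ σ_c (δ^r + ‖τ‖^r + ‖η‖^r)^{(r−2)/r} ‖τ − η‖ and (H2) ⟨σ(τ) − σ(η), τ − η⟩ ≥ σ_m (δ^r + ‖τ‖^r + ‖η‖^r)^{(r−2)/r} ‖τ − η‖². Then there exist constants c, C > 0 depending only on σ_c, σ_m and r such that for all τ, η ∈ V: c (δ + ‖τ‖ + ‖η‖)^{r−2} ‖τ − η‖ ≤ ‖σ(τ) − σ(η)‖ ≤ C (δ + ‖τ‖ + ‖η‖)^{r−2} ‖τ − η‖. -/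

import Mathlib

/-!
With `N := (δ^r + ‖τ‖^r + ‖η‖^r)^{1/r}` the weight in (H1)/(H2) is `N^{r-2}`, and
`N ≤ δ + ‖τ‖ + ‖η‖ ≤ 3 N` (superadditivity of `t ↦ t^r` for `r ≥ 1`, resp. each summand is at
most `N`). Hence the two weights agree up to the factor `3^{r-2}`. The upper bound is then (H1),
and the lower bound is (H2) combined with Cauchy–Schwarz.
-/

open scoped RealInnerProductSpace

section ThreeTermPowerMean

variable {x y z p : ℝ}

lemma rpow_add_rpow_add_rpow_rpow_inv_le_add (hx : 0 ≤ x) (hy : 0 ≤ y) (hz : 0 ≤ z)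
    (hp : 1 ≤ p) : (x ^ p + y ^ p + z ^ p) ^ p⁻¹ ≤ x + y + z := by
  rw [Real.rpow_inv_le_iff_of_pos (by positivity) (by positivity) (by linarith)]
  calc x ^ p + y ^ p + z ^ p ≤ (x + y) ^ p + z ^ p := by
        gcongr; exact Real.add_rpow_le_rpow_add hx hy hp
    _ ≤ (x + y + z) ^ p := Real.add_rpow_le_rpow_add (by positivity) hz hp

lemma add_add_le_three_mul_rpow_add_rpow_add_rpow_rpow_inv (hx : 0 ≤ x) (hy : 0 ≤ y)
    (hz : 0 ≤ z) (hp : 0 < p) : x + y + z ≤ 3 * (x ^ p + y ^ p + z ^ p) ^ p⁻¹ := by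
  have hS : 0 ≤ x ^ p + y ^ p + z ^ p := by positivity
  have le_rpow_inv {a : ℝ} (ha : 0 ≤ a) (h : a ^ p ≤ x ^ p + y ^ p + z ^ p) :
      a ≤ (x ^ p + y ^ p + z ^ p) ^ p⁻¹ :=
    (Real.le_rpow_inv_iff_of_pos ha hS hp).2 h
  have hxp : 0 ≤ x ^ p := by positivity
  have hyp : 0 ≤ y ^ p := by positivity
  have hzp : 0 ≤ z ^ p := by positivity
  linarith [le_rpow_inv hx (by linarith), le_rpow_inv hy (by linarith),
    le_rpow_inv hz (by linarith)]

end ThreeTermPowerMean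

section Weight

variable {x y z r : ℝ}

lemma rpow_add_rpow_add_rpow_rpow_div_eq (hx : 0 ≤ x) (hy : 0 ≤ y) (hz : 0 ≤ z) :
    (x ^ r + y ^ r + z ^ r) ^ ((r - 2) / r) = ((x ^ r + y ^ r + z ^ r) ^ r⁻¹) ^ (r - 2) := by
  rw [← Real.rpow_mul (by positivity), inv_mul_eq_div]

lemma rpow_add_rpow_add_rpow_rpow_div_le (hx : 0 ≤ x) (hy : 0 ≤ y) (hz : 0 ≤ z)
    (hr : 2 ≤ r) : (x ^ r + y ^ r + z ^ r) ^ ((r - 2) / r) ≤ (x + y + z) ^ (r - 2) := by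
  rw [rpow_add_rpow_add_rpow_rpow_div_eq hx hy hz]
  exact Real.rpow_le_rpow (by positivity)
    (rpow_add_rpow_add_rpow_rpow_inv_le_add hx hy hz (by linarith)) (by linarith)

lemma add_add_rpow_le_three_rpow_mul (hx : 0 ≤ x) (hy : 0 ≤ y) (hz : 0 ≤ z) (hr : 2 ≤ r) :
    (x + y + z) ^ (r - 2) ≤ 3 ^ (r - 2) * (x ^ r + y ^ r + z ^ r) ^ ((r - 2) / r) := by
  have hN : 0 ≤ (x ^ r + y ^ r + z ^ r) ^ r⁻¹ := by positivity
  rw [rpow_add_rpow_add_rpow_rpow_div_eq hx hy hz, ← Real.mul_rpow zero_le_three hN]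
  exact Real.rpow_le_rpow (by positivity)
    (add_add_le_three_mul_rpow_add_rpow_add_rpow_rpow_inv hx hy hz (by linarith)) (by linarith)

end Weight

lemma mul_norm_le_norm_of_mul_sq_le_inner {V : Type*} [NormedAddCommGroup V]
    [InnerProductSpace ℝ V] {a : ℝ} {u v : V} (h : a * ‖v‖ ^ 2 ≤ ⟪u, v⟫) :
    a * ‖v‖ ≤ ‖u‖ := by
  rcases (norm_nonneg v).eq_or_lt with hv | hv
  · rw [← hv, mul_zero]
    exact norm_nonneg u
  · refine le_of_mul_le_mul_right ?_ hv
    calc a * ‖v‖ * ‖v‖ = a * ‖v‖ ^ 2 := by ring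
      _ ≤ ‖u‖ * ‖v‖ := h.trans (real_inner_le_norm u v)

theorem hirn_continuity_equivalence
    {V : Type*} [NormedAddCommGroup V] [InnerProductSpace ℝ V]
    (r σc σm : ℝ) (hr : 2 ≤ r) (hσc : 0 < σc) (hσm : 0 < σm) :
    ∃ c C : ℝ, 0 < c ∧ 0 < C ∧
      ∀ δ : ℝ, 0 ≤ δ → ∀ σ : V → V,
        (∀ τ η : V,
          ‖σ τ - σ η‖ ≤ σc * (δ ^ r + ‖τ‖ ^ r + ‖η‖ ^ r) ^ ((r - 2) / r) * ‖τ - η‖) →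
        (∀ τ η : V,
          σm * (δ ^ r + ‖τ‖ ^ r + ‖η‖ ^ r) ^ ((r - 2) / r) * ‖τ - η‖ ^ 2 ≤
            ⟪σ τ - σ η, τ - η⟫) →
        ∀ τ η : V,
          c * (δ + ‖τ‖ + ‖η‖) ^ (r - 2) * ‖τ - η‖ ≤ ‖σ τ - σ η‖ ∧
            ‖σ τ - σ η‖ ≤ C * (δ + ‖τ‖ + ‖η‖) ^ (r - 2) * ‖τ - η‖ := by
  refine ⟨σm / 3 ^ (r - 2), σc, by positivity, hσc, fun δ hδ σ hH1 hH2 τ η => ⟨?_, ?_⟩⟩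
  · have hweight := add_add_rpow_le_three_rpow_mul hδ (norm_nonneg τ) (norm_nonneg η) hr
    calc σm / 3 ^ (r - 2) * (δ + ‖τ‖ + ‖η‖) ^ (r - 2) * ‖τ - η‖
        ≤ σm / 3 ^ (r - 2) * (3 ^ (r - 2) * (δ ^ r + ‖τ‖ ^ r + ‖η‖ ^ r) ^ ((r - 2) / r)) *
            ‖τ - η‖ := by gcongr
      _ = σm * (δ ^ r + ‖τ‖ ^ r + ‖η‖ ^ r) ^ ((r - 2) / r) * ‖τ - η‖ := by
        field_simp
      _ ≤ ‖σ τ - σ η‖ := mul_norm_le_norm_of_mul_sq_le_inner (hH2 τ η)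
  · calc ‖σ τ - σ η‖
        ≤ σc * (δ ^ r + ‖τ‖ ^ r + ‖η‖ ^ r) ^ ((r - 2) / r) * ‖τ - η‖ := hH1 τ η
      _ ≤ σc * (δ + ‖τ‖ + ‖η‖) ^ (r - 2) * ‖τ - η‖ := by
        gcongr
        exact rpow_add_rpow_add_rpow_rpow_div_le hδ (norm_nonneg τ) (norm_nonneg η) hr
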